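/- Let C = (b,θ,0,m) be a magnetic cycle of length l(C) over a finite set Y with standard edge weights. Then C is (a,0)₁-magnetic-sparse for some a > 0 if and only if F_θ(C) ≢ 0 (mod 2π), and in that case one can take a = 2l(C)/s_θ(C) − 1. Moreover, if l(C) is even, then C is (a,0)₁-bi-magnetic-sparse for some a > 0 if and only if F_θ(C) ≢ 0 (mod 2π); and if l(C) is odd, then C is (a,0)₁-bi-magnetic-sparse for some a > 0 if and only if F_θ(C) ≢ 0 (mod π). -/

import Mathlib

/-!
Going once around the cycle, the defects `τ(x_j) - e^{iθ(x_j,x_{j+1})} τ(x_{j+1})` of a unimodular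
`τ` telescope, so `ι₁(Y) ≥ |1 - e^{iF}| = s_θ(C)`; conversely, when `e^{iF} = 1` the potential is a
gauge and `ι₁(Y) = 0`, so `W = Y` (which has no boundary) violates sparseness for every `a`.
A proper nonempty `W` has at least two boundary edges, which pays for its at most `2n` interior
edge weight as soon as `1 + a ≥ n`; `a = 2n/s_θ(C) - 1 ≥ n - 1` achieves this and also handles
`W = Y`. Replacing `θ` by `θ + π` multiplies `e^{iF}` by `(-1)^n`, which gives the parity
dichotomy for bi-sparseness.
-/

open Complex MeasureTheory
open scoped Classical

noncomputable section

variable {X : Type*}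

/-- The structural hypotheses of a magnetic graph `(b, θ, q, m)` over `X`:
`b` is nonnegative, symmetric, has zero diagonal and summable rows; the
magnetic potential `θ` is antisymmetric modulo `2π`; the measure `m` is positive. -/
def IsMagneticGraph (b θ : X → X → ℝ) (m : X → ℝ) : Prop :=
  (∀ x y, 0 ≤ b x y) ∧ (∀ x y, b x y = b y x) ∧ (∀ x, b x x = 0) ∧
  (∀ x, Summable fun y => b x y) ∧
  (∀ x y, ∃ k : ℤ, θ x y + θ y x = 2 * Real.pi * k) ∧
  (∀ x, 0 < m x)

/-- The `p`-frustration index `ι_{p,θ}(W)` of a finite set `W`. -/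
def frust (b θ : X → X → ℝ) (p : ℝ) (W : Finset X) : ℝ :=
  sInf {r : ℝ | ∃ τ : X → ℂ, (∀ x ∈ W, ‖τ x‖ = 1) ∧
    r = (1 / 2) * ∑ x ∈ W, ∑ y ∈ W,
      b x y * ‖τ x - Complex.exp ((θ x y : ℂ) * Complex.I) * τ y‖ ^ p}

/-- The measure `b(∂W)` of the boundary `∂W = (W×(X∖W)) ∪ ((X∖W)×W)`. -/
def bBoundary (b : X → X → ℝ) (W : Finset X) : ℝ :=
  (∑ x ∈ W, ∑' y : {y : X // y ∉ W}, b x ↑y) +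
  (∑ y ∈ W, ∑' x : {x : X // x ∉ W}, b ↑x y)

/-- `(a,k)_p`-magnetic-sparseness. -/
def MagSparse (b θ : X → X → ℝ) (q m : X → ℝ) (p a k : ℝ) : Prop :=
  ∀ W : Finset X,
    (∑ x ∈ W, ∑ y ∈ W, b x y) ≤
      (1 + a) * frust b θ p W +
      a * ((1 / 2) * bBoundary b W + ∑ x ∈ W, max (q x) 0 * m x) +
      k * ∑ x ∈ W, m x

/-- The energy functional `Q_{p,θ}` on finitely supported functions. -/
def Qform (b θ : X → X → ℝ) (q m : X → ℝ) (p : ℝ) (f : X → ℂ) : ℝ :=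
  (1 / 2) * ∑' x, ∑' y, b x y * ‖f x - Complex.exp ((θ x y : ℂ) * Complex.I) * f y‖ ^ p +
  ∑' x, q x * ‖f x‖ ^ p * m x

/-- The weighted vertex degree `Deg(x) = (1/m(x)) Σ_y b(x,y) + q(x)`. -/
def Degf (b : X → X → ℝ) (q m : X → ℝ) (x : X) : ℝ :=
  (1 / m x) * ∑' y, b x y + q x

/-- The pairing `⟨Deg, |f|^p⟩ = Σ_x Deg(x) |f(x)|^p m(x)`. -/
def degPair (b : X → X → ℝ) (q m : X → ℝ) (p : ℝ) (f : X → ℂ) : ℝ :=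
  ∑' x, Degf b q m x * ‖f x‖ ^ p * m x

/-- The `p`-norm to the `p`: `‖f‖_p^p = Σ_x |f(x)|^p m(x)`. -/
def pNorm (m : X → ℝ) (p : ℝ) (f : X → ℂ) : ℝ :=
  ∑' x, ‖f x‖ ^ p * m x

/-- `q ∈ K_α^{p,θ}` with constant `C`: the negative part of `q` is form bounded. -/
def InKClass (b θ : X → X → ℝ) (q m : X → ℝ) (p α C : ℝ) : Prop :=
  ∀ f : X → ℂ, (Function.support f).Finite →
    (∑' x, max (-q x) 0 * ‖f x‖ ^ p * m x) ≤
      α * Qform b θ (fun x => max (q x) 0) m p f + C * pNorm m p f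


open scoped Real

section Frustration

variable (b θ : X → X → ℝ) (p : ℝ) (W : Finset X)

def frustEnergy (τ : X → ℂ) : ℝ :=
  (1 / 2) * ∑ x ∈ W, ∑ y ∈ W, b x y * ‖τ x - exp (θ x y * I) * τ y‖ ^ p

variable {b}

lemma frustEnergy_nonneg (hb : ∀ x y, 0 ≤ b x y) (τ : X → ℂ) : 0 ≤ frustEnergy b θ p W τ :=
  mul_nonneg (by norm_num) <| Finset.sum_nonneg fun x _ => Finset.sum_nonneg fun y _ =>
    mul_nonneg (hb x y) (Real.rpow_nonneg (norm_nonneg _) p)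

lemma frust_le (hb : ∀ x y, 0 ≤ b x y) (τ : X → ℂ) (hτ : ∀ x ∈ W, ‖τ x‖ = 1) :
    frust b θ p W ≤ frustEnergy b θ p W τ :=
  csInf_le ⟨0, by rintro r ⟨σ, -, rfl⟩; exact frustEnergy_nonneg θ p W hb σ⟩ ⟨τ, hτ, rfl⟩

lemma le_frust {c : ℝ} (h : ∀ τ : X → ℂ, (∀ x ∈ W, ‖τ x‖ = 1) → c ≤ frustEnergy b θ p W τ) :
    c ≤ frust b θ p W := by
  refine le_csInf ⟨_, fun _ => 1, fun _ _ => norm_one, rfl⟩ ?_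
  rintro r ⟨τ, hτ, rfl⟩
  exact h τ hτ

lemma frust_nonneg (hb : ∀ x y, 0 ≤ b x y) : 0 ≤ frust b θ p W :=
  le_frust θ p W fun τ _ => frustEnergy_nonneg θ p W hb τ

end Frustration

lemma bBoundary_eq [Fintype X] {b : X → X → ℝ} (hb : ∀ x y, b x y = b y x) (W : Finset X) :
    bBoundary b W = 2 * ∑ x ∈ W, ∑ y ∈ Wᶜ, b x y := by
  have hcompl (f : X → ℝ) : ∑' y : {y // y ∉ W}, f y = ∑ y ∈ Wᶜ, f y := by
    rw [tsum_fintype]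
    exact (Finset.sum_subtype Wᶜ (fun _ => Finset.mem_compl) f).symm
  simp only [bBoundary, hcompl, hb _ (_ : X)]
  ring

lemma bBoundary_nonneg {b : X → X → ℝ} (hb : ∀ x y, 0 ≤ b x y) (W : Finset X) :
    0 ≤ bBoundary b W :=
  add_nonneg (Finset.sum_nonneg fun _ _ => tsum_nonneg fun _ => hb _ _)
    (Finset.sum_nonneg fun _ _ => tsum_nonneg fun _ => hb _ _)

lemma MagSparse.mono {b θ : X → X → ℝ} {q m : X → ℝ} {p a a' k : ℝ}
    (hb : ∀ x y, 0 ≤ b x y) (hm : ∀ x, 0 ≤ m x) (h : MagSparse b θ q m p a k) (haa' : a ≤ a') :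
    MagSparse b θ q m p a' k := by
  intro W
  have hfrust := frust_nonneg θ p W hb
  have hbd : 0 ≤ (1 / 2) * bBoundary b W + ∑ x ∈ W, max (q x) 0 * m x :=
    add_nonneg (by linarith [bBoundary_nonneg hb W])
      (Finset.sum_nonneg fun x _ => mul_nonneg (le_max_right _ _) (hm x))
  nlinarith [h W, mul_nonneg (sub_nonneg.2 haa') hfrust, mul_nonneg (sub_nonneg.2 haa') hbd]

lemma exists_magSparse_and_magSparse_iff {b θ₁ θ₂ : X → X → ℝ} {q m : X → ℝ} {p k : ℝ}
    (hb : ∀ x y, 0 ≤ b x y) (hm : ∀ x, 0 ≤ m x) :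
    (∃ a > 0, MagSparse b θ₁ q m p a k ∧ MagSparse b θ₂ q m p a k) ↔
      (∃ a > 0, MagSparse b θ₁ q m p a k) ∧ (∃ a > 0, MagSparse b θ₂ q m p a k) := by
  refine ⟨fun ⟨a, ha, h₁, h₂⟩ => ⟨⟨a, ha, h₁⟩, ⟨a, ha, h₂⟩⟩, ?_⟩
  rintro ⟨⟨a₁, ha₁, h₁⟩, ⟨a₂, -, h₂⟩⟩
  exact ⟨max a₁ a₂, lt_max_of_lt_left ha₁, h₁.mono hb hm (le_max_left _ _),
    h₂.mono hb hm (le_max_right _ _)⟩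

lemma magSparse_zero_iff [Fintype X] {b θ : X → X → ℝ} {m : X → ℝ} {p a : ℝ}
    (hb : ∀ x y, b x y = b y x) :
    MagSparse b θ (fun _ => 0) m p a 0 ↔ ∀ W : Finset X,
      ∑ x ∈ W, ∑ y ∈ W, b x y ≤ (1 + a) * frust b θ p W + a * ∑ x ∈ W, ∑ y ∈ Wᶜ, b x y := by
  refine forall_congr' fun W => ?_
  simp only [bBoundary_eq hb, max_self, zero_mul, Finset.sum_const_zero, add_zero]
  ring_nf

section UnitCircle

lemma exp_ofReal_mul_I_eq_one_iff (x : ℝ) : exp (x * I) = 1 ↔ ∃ k : ℤ, x = 2 * π * k := by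
  rw [Complex.exp_eq_one_iff]
  refine exists_congr fun k => ?_
  rw [show (k : ℂ) * (2 * π * I) = ((2 * π * k : ℝ) : ℂ) * I by push_cast; ring,
    mul_left_inj' I_ne_zero, ofReal_inj]

lemma exp_ofReal_mul_I_eq_one_or_eq_neg_one_iff (x : ℝ) :
    exp (x * I) = 1 ∨ exp (x * I) = -1 ↔ ∃ k : ℤ, x = π * k := by
  rw [← sq_eq_one_iff, ← Complex.exp_nat_mul, show ((2 : ℕ) : ℂ) * (x * I) = (2 * x : ℝ) * I by
    push_cast; ring, exp_ofReal_mul_I_eq_one_iff]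
  exact exists_congr fun k => by constructor <;> intro h <;> linarith

lemma exp_add_nat_mul_pi_mul_I (x : ℝ) (n : ℕ) :
    exp ((x + n * π : ℝ) * I) = (-1) ^ n * exp (x * I) := by
  rw [← Complex.exp_pi_mul_I, ← Complex.exp_nat_mul, ← Complex.exp_add]
  push_cast
  ring_nf

lemma norm_sub_exp_mul_I_mul_comm {φ ψ : ℝ} {k : ℤ} (h : φ + ψ = 2 * π * k) (u v : ℂ) :
    ‖v - exp (ψ * I) * u‖ = ‖u - exp (φ * I) * v‖ := by
  have hprod : exp (φ * I) * exp (ψ * I) = 1 := by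
    rw [← Complex.exp_add, ← add_mul, ← ofReal_add, h, exp_ofReal_mul_I_eq_one_iff]
    exact ⟨k, rfl⟩
  calc ‖v - exp (ψ * I) * u‖ = ‖exp (φ * I) * (v - exp (ψ * I) * u)‖ := by
        rw [norm_mul, norm_exp_ofReal_mul_I, one_mul]
    _ = ‖u - exp (φ * I) * v‖ := by
        rw [mul_sub, ← mul_assoc, hprod, one_mul, norm_sub_rev]

lemma le_two_mul_div_norm_one_sub_exp {x c : ℝ} (hx : exp (x * I) ≠ 1) (hc : 0 ≤ c) :
    c ≤ 2 * c / ‖1 - exp (x * I)‖ := by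
  have hpos : 0 < ‖1 - exp (x * I)‖ := norm_pos_iff.2 (sub_ne_zero.2 hx.symm)
  have hle : ‖1 - exp (x * I)‖ ≤ 2 :=
    (norm_sub_le _ _).trans (by rw [norm_one, norm_exp_ofReal_mul_I]; norm_num)
  rw [le_div_iff₀ hpos]
  nlinarith

end UnitCircle

section ZModCycle

lemma norm_sub_exp_sum_mul_le (u : ℕ → ℂ) (φ : ℕ → ℝ) (N : ℕ) :
    ‖u 0 - exp ((∑ j ∈ Finset.range N, φ j : ℝ) * I) * u N‖ ≤
      ∑ j ∈ Finset.range N, ‖u j - exp (φ j * I) * u (j + 1)‖ := by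
  set E : ℕ → ℂ := fun j => exp ((∑ l ∈ Finset.range j, φ l : ℝ) * I)
  have hE (j : ℕ) : E (j + 1) = E j * exp (φ j * I) := by
    simp only [E, Finset.sum_range_succ, ofReal_add, add_mul, Complex.exp_add]
  have htel : u 0 - E N * u N = ∑ j ∈ Finset.range N, E j * (u j - exp (φ j * I) * u (j + 1)) := by
    rw [← one_mul (u 0), ← show E 0 = 1 by simp [E], ← Finset.sum_range_sub' (fun j => E j * u j)]
    exact Finset.sum_congr rfl fun j _ => by rw [hE]; ring
  calc ‖u 0 - E N * u N‖ ≤ ∑ j ∈ Finset.range N, ‖E j * (u j - exp (φ j * I) * u (j + 1))‖ :=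
        htel ▸ norm_sum_le _ _
    _ = _ := by simp only [E, norm_mul, norm_exp_ofReal_mul_I, one_mul]

variable {n : ℕ} [NeZero n]

lemma ZMod.sum_eq_sum_range {M : Type*} [AddCommMonoid M] (f : ZMod n → M) :
    ∑ j, f j = ∑ l ∈ Finset.range n, f l :=
  Finset.sum_nbij' ZMod.val (↑) (fun j _ => Finset.mem_range.2 j.val_lt)
    (fun _ _ => Finset.mem_univ _) (fun j _ => ZMod.natCast_zmod_val j)
    (fun _ hl => ZMod.val_cast_of_lt (Finset.mem_range.1 hl))
    (fun j _ => by rw [ZMod.natCast_zmod_val])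

lemma norm_one_sub_exp_sum_le (u : ZMod n → ℂ) (hu : ‖u 0‖ = 1) (φ : ZMod n → ℝ) :
    ‖1 - exp ((∑ j, φ j : ℝ) * I)‖ ≤ ∑ j, ‖u j - exp (φ j * I) * u (j + 1)‖ := by
  have h := norm_sub_exp_sum_mul_le (fun l => u l) (fun l => φ l) n
  simp only [ZMod.natCast_self, Nat.cast_zero, Nat.cast_succ] at h
  rw [ZMod.sum_eq_sum_range, ZMod.sum_eq_sum_range (fun j => ‖u j - exp (φ j * I) * u (j + 1)‖)]
  calc ‖1 - exp ((∑ l ∈ Finset.range n, φ l : ℝ) * I)‖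
      = ‖u 0 - exp ((∑ l ∈ Finset.range n, φ l : ℝ) * I) * u 0‖ := by
        rw [← one_sub_mul, norm_mul, hu, mul_one]
    _ ≤ _ := h

lemma exists_gauge_of_exp_sum_eq_one (φ : ZMod n → ℝ) (h : exp ((∑ j, φ j : ℝ) * I) = 1) :
    ∃ u : ZMod n → ℂ, (∀ j, ‖u j‖ = 1) ∧ ∀ j, u j = exp (φ j * I) * u (j + 1) := by
  set S : ℕ → ℝ := fun k => ∑ l ∈ Finset.range k, φ l
  refine ⟨fun j => exp ((-S j.val : ℝ) * I), fun j => norm_exp_ofReal_mul_I _, fun j => ?_⟩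
  have hstep : S (j.val + 1) = S j.val + φ j := by
    simp only [S, Finset.sum_range_succ, ZMod.natCast_zmod_val]
  have hval : (j + 1).val = (j.val + 1) % n := by
    rw [ZMod.val_add, ZMod.val_one_eq_one_mod, Nat.add_mod_mod]
  have hnext : exp ((-S (j + 1).val : ℝ) * I) = exp ((-S (j.val + 1) : ℝ) * I) := by
    rcases (by have := j.val_lt; omega : j.val + 1 < n ∨ j.val + 1 = n) with hlt | heq
    · rw [hval, Nat.mod_eq_of_lt hlt]
    · have hS : S n = ∑ j, φ j := (ZMod.sum_eq_sum_range φ).symm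
      simp only [hval, heq, Nat.mod_self, hS, ofReal_neg, neg_mul, Complex.exp_neg, h]
      simp [S]
  simp only
  rw [hnext, hstep, ← Complex.exp_add]
  congr 1
  push_cast
  ring

lemma ZMod.exists_and_not_add_one (p : ZMod n → Prop) (h₁ : ∃ j, p j) (h₂ : ∃ j, ¬ p j) :
    ∃ j, p j ∧ ¬ p (j + 1) := by
  by_contra! hcl
  obtain ⟨w, hw⟩ := h₁
  have hk (k : ℕ) : p (w + k) := by
    induction k with
    | zero => simpa using hw
    | succ k ih => simpa [add_assoc] using hcl _ ih
  obtain ⟨y, hy⟩ := h₂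
  exact hy (by simpa using hk (y - w).val)

end ZModCycle

section Cycle

variable {n : ℕ} {Y : Type*} (Φ : Y ≃ ZMod n)

def cycleWeight (x y : Y) : ℝ := if Φ x - Φ y = 1 ∨ Φ x - Φ y = -1 then 1 else 0

lemma cycleWeight_nonneg (x y : Y) : 0 ≤ cycleWeight Φ x y := by
  unfold cycleWeight; split <;> norm_num

lemma cycleWeight_comm (x y : Y) : cycleWeight Φ x y = cycleWeight Φ y x := by
  simp only [cycleWeight, ← neg_sub (Φ x), neg_eq_iff_eq_neg, neg_neg, or_comm]

def cycleFlux [NeZero n] (θ : Y → Y → ℝ) : ℝ := ∑ j, θ (Φ.symm j) (Φ.symm (j + 1))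

lemma cycleFlux_add_const [NeZero n] (θ : Y → Y → ℝ) (c : ℝ) :
    cycleFlux Φ (fun x y => θ x y + c) = cycleFlux Φ θ + n * c := by
  simp [cycleFlux, Finset.sum_add_distrib]

variable {Φ} [Fintype Y]

lemma sum_cycleWeight_mul (hn : 3 ≤ n) (x : Y) (t : Y → ℝ) :
    ∑ y, cycleWeight Φ x y * t y = t (Φ.symm (Φ x + 1)) + t (Φ.symm (Φ x - 1)) := by
  have hne : Φ x + 1 ≠ Φ x - 1 := by
    have : Fact (2 < n) := ⟨hn⟩
    simpa [sub_eq_add_neg] using (ZMod.neg_one_ne_one (n := n)).symm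
  have hw (y : Y) : cycleWeight Φ x y =
      (if Φ.symm (Φ x + 1) = y then 1 else 0) + (if Φ.symm (Φ x - 1) = y then 1 else 0) := by
    have hadj : Φ x - Φ y = 1 ∨ Φ x - Φ y = -1 ↔ Φ x + 1 = Φ y ∨ Φ x - 1 = Φ y := by
      rw [or_comm]
      constructor <;> rintro (h | h) <;> [left; right; left; right] <;> linear_combination h
    simp only [cycleWeight, Φ.symm_apply_eq, hadj]
    by_cases h₁ : Φ x + 1 = Φ y <;> by_cases h₂ : Φ x - 1 = Φ y
    · exact absurd (h₁.trans h₂.symm) hne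
    all_goals simp [h₁, h₂]
  simp only [hw, add_mul, ite_mul, one_mul, zero_mul, Finset.sum_add_distrib,
    Finset.sum_ite_eq, Finset.mem_univ, if_true]

lemma sum_cycleWeight (hn : 3 ≤ n) (x : Y) : ∑ y, cycleWeight Φ x y = 2 := by
  simpa [one_add_one_eq_two] using sum_cycleWeight_mul hn x (fun _ => 1)

lemma sum_sum_cycleWeight (hn : 3 ≤ n) (W : Finset Y) :
    ∑ x ∈ W, ∑ y ∈ W, cycleWeight Φ x y =
      2 * W.card - ∑ x ∈ W, ∑ y ∈ Wᶜ, cycleWeight Φ x y := by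
  have hrow (x : Y) : ∑ y ∈ W, cycleWeight Φ x y + ∑ y ∈ Wᶜ, cycleWeight Φ x y = 2 := by
    rw [Finset.sum_add_sum_compl, sum_cycleWeight hn]
  have := Finset.sum_congr rfl fun x (_ : x ∈ W) => hrow x
  rw [Finset.sum_add_distrib, Finset.sum_const, nsmul_eq_mul] at this
  linarith

variable [NeZero n]

lemma sum_sum_cycleWeight_mul (hn : 3 ≤ n) (t : Y → Y → ℝ) :
    ∑ x, ∑ y, cycleWeight Φ x y * t x y =
      ∑ j, (t (Φ.symm j) (Φ.symm (j + 1)) + t (Φ.symm (j + 1)) (Φ.symm j)) := by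
  simp only [sum_cycleWeight_mul hn, Finset.sum_add_distrib]
  rw [← Φ.symm.sum_comp, ← Φ.symm.sum_comp, ← Equiv.sum_comp (Equiv.addRight (1 : ZMod n))
    (fun j => t (Φ.symm j) (Φ.symm (Φ (Φ.symm j) - 1)))]
  simp

lemma two_le_sum_sum_cycleWeight_compl (hn : 3 ≤ n) {W : Finset Y} (hne : W.Nonempty)
    (hW : W ≠ Finset.univ) : 2 ≤ ∑ x ∈ W, ∑ y ∈ Wᶜ, cycleWeight Φ x y := by
  set cut : Y → Y → ℝ := fun x y => if x ∈ W ∧ y ∉ W then 1 else 0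
  have hcut : ∑ x ∈ W, ∑ y ∈ Wᶜ, cycleWeight Φ x y = ∑ x, ∑ y, cycleWeight Φ x y * cut x y := by
    simp only [cut, mul_ite, mul_one, mul_zero, ite_and, Finset.sum_ite_irrel,
      Finset.sum_const_zero, ← Finset.mem_compl, Finset.sum_ite_mem, Finset.univ_inter]
  obtain ⟨x, hx⟩ := hne
  obtain ⟨y, hy⟩ : ∃ y, y ∉ W := by simpa [Finset.eq_univ_iff_forall] using hW
  -- Going around the cycle, `W` is left right after some `j₁` and entered right after some `j₂`.
  obtain ⟨j₁, hj₁⟩ := ZMod.exists_and_not_add_one (fun j => Φ.symm j ∈ W)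
    ⟨Φ x, by simpa⟩ ⟨Φ y, by simpa⟩
  obtain ⟨j₂, hj₂⟩ := ZMod.exists_and_not_add_one (fun j => Φ.symm j ∉ W)
    ⟨Φ y, by simpa⟩ ⟨Φ x, by simpa⟩
  have hcut_nonneg (u v : Y) : 0 ≤ cut u v := by simp only [cut]; split <;> norm_num
  rw [hcut, sum_sum_cycleWeight_mul hn, Finset.sum_add_distrib]
  calc (2 : ℝ) = cut (Φ.symm j₁) (Φ.symm (j₁ + 1)) + cut (Φ.symm (j₂ + 1)) (Φ.symm j₂) := by
        simp only [cut, if_pos hj₁, if_pos (show _ ∧ _ from ⟨not_not.1 hj₂.2, hj₂.1⟩)]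
        norm_num
    _ ≤ _ := add_le_add
        (Finset.single_le_sum (f := fun j => cut (Φ.symm j) (Φ.symm (j + 1)))
          (fun _ _ => hcut_nonneg _ _) (Finset.mem_univ j₁))
        (Finset.single_le_sum (f := fun j => cut (Φ.symm (j + 1)) (Φ.symm j))
          (fun _ _ => hcut_nonneg _ _) (Finset.mem_univ j₂))

end Cycle

section CycleSparse

variable {n : ℕ} [NeZero n] {Y : Type*} [Fintype Y] {Φ : Y ≃ ZMod n} {θ : Y → Y → ℝ}

lemma frustEnergy_cycleWeight_univ (hn : 3 ≤ n) (hθ : ∀ x y, ∃ k : ℤ, θ x y + θ y x = 2 * π * k)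
    (τ : Y → ℂ) :
    frustEnergy (cycleWeight Φ) θ 1 Finset.univ τ =
      ∑ j, ‖τ (Φ.symm j) - exp (θ (Φ.symm j) (Φ.symm (j + 1)) * I) * τ (Φ.symm (j + 1))‖ := by
  have hback (x y : Y) : ‖τ y - exp (θ y x * I) * τ x‖ = ‖τ x - exp (θ x y * I) * τ y‖ :=
    norm_sub_exp_mul_I_mul_comm (hθ x y).choose_spec _ _
  simp only [frustEnergy, Real.rpow_one]
  rw [sum_sum_cycleWeight_mul hn (fun x y => ‖τ x - exp (θ x y * I) * τ y‖)]
  simp only [hback, ← two_mul, ← Finset.mul_sum]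
  ring

lemma norm_one_sub_exp_cycleFlux_le_frust (hn : 3 ≤ n)
    (hθ : ∀ x y, ∃ k : ℤ, θ x y + θ y x = 2 * π * k) :
    ‖1 - exp (cycleFlux Φ θ * I)‖ ≤ frust (cycleWeight Φ) θ 1 Finset.univ :=
  le_frust θ 1 _ fun τ hτ => by
    rw [frustEnergy_cycleWeight_univ hn hθ]
    exact norm_one_sub_exp_sum_le (fun j => τ (Φ.symm j)) (hτ _ (Finset.mem_univ _)) _

lemma frust_cycleWeight_univ_eq_zero (hn : 3 ≤ n)
    (hθ : ∀ x y, ∃ k : ℤ, θ x y + θ y x = 2 * π * k) (hF : exp (cycleFlux Φ θ * I) = 1) :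
    frust (cycleWeight Φ) θ 1 Finset.univ = 0 := by
  obtain ⟨u, hu, hgauge⟩ := exists_gauge_of_exp_sum_eq_one _ hF
  refine le_antisymm ?_ (frust_nonneg θ 1 _ (cycleWeight_nonneg Φ))
  refine (frust_le θ 1 _ (cycleWeight_nonneg Φ) (fun y => u (Φ y)) fun y _ => hu _).trans ?_
  rw [frustEnergy_cycleWeight_univ hn hθ]
  simp [← hgauge]

lemma cycle_magSparse (hn : 3 ≤ n) (hθ : ∀ x y, ∃ k : ℤ, θ x y + θ y x = 2 * π * k)
    (hF : exp (cycleFlux Φ θ * I) ≠ 1) (m : Y → ℝ) :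
    MagSparse (cycleWeight Φ) θ (fun _ => 0) m 1
      (2 * n / ‖1 - exp (cycleFlux Φ θ * I)‖ - 1) 0 := by
  set s := ‖1 - exp (cycleFlux Φ θ * I)‖
  have hs : 0 < s := norm_pos_iff.2 (sub_ne_zero.2 hF.symm)
  have hna : (n : ℝ) ≤ 2 * n / s := le_two_mul_div_norm_one_sub_exp hF n.cast_nonneg
  have hcard : (Finset.univ : Finset Y).card = n := by
    rw [Finset.card_univ, Fintype.card_congr Φ, ZMod.card]
  rw [magSparse_zero_iff (cycleWeight_comm Φ)]
  intro W
  have hfrust := frust_nonneg θ 1 W (cycleWeight_nonneg Φ)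
  rw [sum_sum_cycleWeight hn]
  by_cases hW : W = Finset.univ
  · subst hW
    have hs_le := norm_one_sub_exp_cycleFlux_le_frust hn hθ (Φ := Φ)
    have h2n : 2 * (n : ℝ) = 2 * n / s * s := by field_simp
    simp only [hcard, Finset.compl_univ, Finset.sum_empty, Finset.sum_const_zero]
    nlinarith
  · have hcut : 2 * (W.card : ℝ) ≤ 2 * n / s * ∑ x ∈ W, ∑ y ∈ Wᶜ, cycleWeight Φ x y := by
      rcases W.eq_empty_or_nonempty with rfl | hne
      · simp
      have hWn : (W.card : ℝ) ≤ n := by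
        rw [← hcard]; exact_mod_cast Finset.card_le_card (Finset.subset_univ W)
      nlinarith [two_le_sum_sum_cycleWeight_compl (Φ := Φ) hn hne hW]
    nlinarith

lemma not_magSparse_cycle (hn : 3 ≤ n) (hθ : ∀ x y, ∃ k : ℤ, θ x y + θ y x = 2 * π * k)
    (hF : exp (cycleFlux Φ θ * I) = 1) (m : Y → ℝ) (a : ℝ) :
    ¬ MagSparse (cycleWeight Φ) θ (fun _ => 0) m 1 a 0 := by
  intro h
  have := (magSparse_zero_iff (cycleWeight_comm Φ)).1 h Finset.univ
  simp only [sum_sum_cycleWeight hn, frust_cycleWeight_univ_eq_zero hn hθ hF, Finset.card_univ,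
    Fintype.card_congr Φ, ZMod.card, Finset.compl_univ, Finset.sum_empty,
    Finset.sum_const_zero] at this
  have : (3 : ℝ) ≤ n := by exact_mod_cast hn
  linarith

lemma cycle_exists_magSparse_iff (hn : 3 ≤ n)
    (hθ : ∀ x y, ∃ k : ℤ, θ x y + θ y x = 2 * π * k) (m : Y → ℝ) :
    (∃ a > 0, MagSparse (cycleWeight Φ) θ (fun _ => 0) m 1 a 0) ↔
      exp (cycleFlux Φ θ * I) ≠ 1 := by
  refine ⟨fun ⟨a, _, h⟩ hF => not_magSparse_cycle hn hθ hF m a h,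
    fun hF => ⟨_, ?_, cycle_magSparse hn hθ hF m⟩⟩
  have : (3 : ℝ) ≤ n := by exact_mod_cast hn
  linarith [le_two_mul_div_norm_one_sub_exp hF n.cast_nonneg]

end CycleSparse

/-- a magnetic cycle of length `n` with standard edge weights is
`(a,0)₁`-magnetic-sparse for some `a > 0` iff the flux `F` is not `≡ 0 (mod 2π)`, in
which case `a = 2n/s_θ(C) − 1` works; moreover, for even `n` it is
`(a,0)₁`-bi-magnetic-sparse for some `a > 0` iff `F ≢ 0 (mod 2π)`, and for odd `n`
iff `F ≢ 0 (mod π)`. -/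
theorem cycle_sparse (n : ℕ) [NeZero n] (hn : 3 ≤ n)
    {Y : Type*} [Fintype Y] (Φ : Y ≃ ZMod n)
    (b θ : Y → Y → ℝ) (m : Y → ℝ)
    (hb : ∀ x y, b x y = if (Φ x - Φ y = 1 ∨ Φ x - Φ y = -1) then 1 else 0)
    (hG : IsMagneticGraph b θ m)
    (F : ℝ) (hF : F = ∑ j : ZMod n, θ (Φ.symm j) (Φ.symm (j + 1))) :
    ((∃ a > (0 : ℝ), MagSparse b θ (fun _ => 0) m 1 a 0) ↔
        ¬ ∃ k : ℤ, F = 2 * Real.pi * k) ∧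
    ((¬ ∃ k : ℤ, F = 2 * Real.pi * k) →
        MagSparse b θ (fun _ => 0) m 1
          (2 * n / ‖(1 : ℂ) - Complex.exp ((F : ℂ) * Complex.I)‖ - 1) 0) ∧
    (Even n →
      ((∃ a > (0 : ℝ), MagSparse b θ (fun _ => 0) m 1 a 0 ∧
          MagSparse b (fun x y => θ x y + Real.pi) (fun _ => 0) m 1 a 0) ↔
        ¬ ∃ k : ℤ, F = 2 * Real.pi * k)) ∧
    (Odd n →
      ((∃ a > (0 : ℝ), MagSparse b θ (fun _ => 0) m 1 a 0 ∧
          MagSparse b (fun x y => θ x y + Real.pi) (fun _ => 0) m 1 a 0) ↔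
        ¬ ∃ k : ℤ, F = Real.pi * k)) := by
  obtain ⟨-, -, -, -, hθ, hm⟩ := hG
  obtain rfl : b = cycleWeight Φ := funext₂ hb
  obtain rfl : F = cycleFlux Φ θ := hF
  have hθπ (x y : Y) : ∃ k : ℤ, (θ x y + π) + (θ y x + π) = 2 * π * k := by
    obtain ⟨k, hk⟩ := hθ x y
    exact ⟨k + 1, by push_cast; linarith⟩
  have hbi : (∃ a > (0 : ℝ), MagSparse (cycleWeight Φ) θ (fun _ => 0) m 1 a 0 ∧
      MagSparse (cycleWeight Φ) (fun x y => θ x y + π) (fun _ => 0) m 1 a 0) ↔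
      exp (cycleFlux Φ θ * I) ≠ 1 ∧ (-1) ^ n * exp (cycleFlux Φ θ * I) ≠ 1 := by
    rw [exists_magSparse_and_magSparse_iff (cycleWeight_nonneg Φ) fun x => (hm x).le,
      cycle_exists_magSparse_iff hn hθ, cycle_exists_magSparse_iff hn hθπ,
      cycleFlux_add_const, exp_add_nat_mul_pi_mul_I]
  refine ⟨?_, fun hF => cycle_magSparse hn hθ ((exp_ofReal_mul_I_eq_one_iff _).not.2 hF) m,
    fun hev => ?_, fun hodd => ?_⟩
  · rw [cycle_exists_magSparse_iff hn hθ, ne_eq, exp_ofReal_mul_I_eq_one_iff]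
  · rw [hbi, hev.neg_one_pow, one_mul, and_self, ne_eq, exp_ofReal_mul_I_eq_one_iff]
  · rw [hbi, hodd.neg_one_pow, neg_one_mul, ne_eq, ne_eq, neg_eq_iff_eq_neg, ← not_or,
      exp_ofReal_mul_I_eq_one_or_eq_neg_one_iff]
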